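/- Fix an integer k ≥ 1 and reals 0 < m₁ ≤ m₂, and define ψᵢ(u) = ∫_0^u exp((mᵢ/(k+1)) t^{k+1}) dt for i = 1, 2 and u ≥ 0. Then for every z > 1 there exists a constant C_z > 0 such that (ψ₂(u))^{m₁/m₂} ≤ C_z ( 1 + (ψ₁(u))^z ) for all u ≥ 0. -/
import Mathlib


open MeasureTheory Filter Set
open scoped Topology

/-- `ψᵢ(u) = ∫₀ᵘ exp((mᵢ/(k+1)) t^{k+1}) dt`, the change of variables in the model case
`β(s) = s^k`, with parameter `m`. -/
noncomputable def psiK (k : ℕ) (m : ℝ) (u : ℝ) : ℝ :=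
  ∫ t in (0:ℝ)..u, Real.exp ((m / ((k:ℝ) + 1)) * t ^ (k + 1))

lemma psiK_cont (k : ℕ) (m : ℝ) :
    Continuous fun t : ℝ => Real.exp ((m / ((k:ℝ) + 1)) * t ^ (k + 1)) :=
  Real.continuous_exp.comp (continuous_const.mul (continuous_pow _))

lemma psiK_nonneg (k : ℕ) (m : ℝ) {u : ℝ} (hu : 0 ≤ u) : 0 ≤ psiK k m u :=
  intervalIntegral.integral_nonneg hu (fun t _ => (Real.exp_pos _).le)

lemma psiK_le (k : ℕ) (m : ℝ) (hm : 0 ≤ m) {u : ℝ} (hu : 0 ≤ u) :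
    psiK k m u ≤ u * Real.exp ((m / ((k:ℝ) + 1)) * u ^ (k + 1)) := by
  have h1 : psiK k m u ≤ ∫ _t in (0:ℝ)..u, Real.exp ((m / ((k:ℝ) + 1)) * u ^ (k + 1)) := by
    apply intervalIntegral.integral_mono_on hu
      ((psiK_cont k m).intervalIntegrable _ _) intervalIntegrable_const
    intro t ht
    apply Real.exp_le_exp.mpr
    apply mul_le_mul_of_nonneg_left _ (by positivity)
    exact pow_le_pow_left₀ ht.1 ht.2 _
  simpa using h1

lemma psiK_ge (k : ℕ) (m : ℝ) (hm : 0 ≤ m) {a u : ℝ} (ha : 0 ≤ a) (hau : a ≤ u) :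
    (u - a) * Real.exp ((m / ((k:ℝ) + 1)) * a ^ (k + 1)) ≤ psiK k m u := by
  have hsplit : (∫ t in (0:ℝ)..a, Real.exp ((m / ((k:ℝ) + 1)) * t ^ (k + 1)))
      + (∫ t in a..u, Real.exp ((m / ((k:ℝ) + 1)) * t ^ (k + 1))) = psiK k m u :=
    intervalIntegral.integral_add_adjacent_intervals
      ((psiK_cont k m).intervalIntegrable _ _) ((psiK_cont k m).intervalIntegrable _ _)
  have h1 : 0 ≤ ∫ t in (0:ℝ)..a, Real.exp ((m / ((k:ℝ) + 1)) * t ^ (k + 1)) :=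
    intervalIntegral.integral_nonneg ha fun t _ => (Real.exp_pos _).le
  have h2 : (u - a) * Real.exp ((m / ((k:ℝ) + 1)) * a ^ (k + 1))
      ≤ ∫ t in a..u, Real.exp ((m / ((k:ℝ) + 1)) * t ^ (k + 1)) := by
    have hpt : ∀ t ∈ Set.Icc a u,
        Real.exp ((m / ((k:ℝ) + 1)) * a ^ (k + 1))
          ≤ Real.exp ((m / ((k:ℝ) + 1)) * t ^ (k + 1)) := by
      intro t ht
      apply Real.exp_le_exp.mpr
      apply mul_le_mul_of_nonneg_left _ (by positivity)
      exact pow_le_pow_left₀ ha ht.1 _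
    have := intervalIntegral.integral_mono_on (μ := MeasureTheory.volume) hau
      intervalIntegrable_const ((psiK_cont k m).intervalIntegrable _ _) hpt
    simpa using this
  linarith

lemma exp_rpow' (x y : ℝ) : (Real.exp x) ^ y = Real.exp (x * y) := by
  rw [Real.rpow_def_of_pos (Real.exp_pos x), Real.log_exp]

lemma habs' (E P X : ℝ) (hE : 0 < E) (hP : 0 < P) (hX : 0 ≤ X) :
    P * X ≤ (E + P) * (1 + X) := by nlinarith

set_option maxHeartbeats 1000000 in
theorem stmt19 (k : ℕ) (hk : 1 ≤ k) (m₁ m₂ : ℝ) (hm₁ : 0 < m₁) (hm₂ : m₁ ≤ m₂) :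
    ∀ z : ℝ, 1 < z → ∃ C > (0:ℝ), ∀ u : ℝ, 0 ≤ u →
      (psiK k m₂ u) ^ (m₁ / m₂) ≤ C * (1 + (psiK k m₁ u) ^ z) := by
  intro z hz
  have hz0 : (0:ℝ) < z := by linarith
  have hk1 : (0:ℝ) < (k:ℝ) + 1 := by positivity
  have hm₂0 : 0 < m₂ := lt_of_lt_of_le hm₁ hm₂
  set a₁ := m₁ / ((k:ℝ) + 1) with ha₁
  set a₂ := m₂ / ((k:ℝ) + 1) with ha₂
  have ha₁0 : 0 < a₁ := by positivity
  have ha₂0 : 0 < a₂ := by positivity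
  set r := m₁ / m₂ with hrdef
  have hr0 : 0 < r := by positivity
  have hr1 : r ≤ 1 := (div_le_one hm₂0).mpr hm₂
  have hra : r * a₂ = a₁ := by
    rw [hrdef, ha₁, ha₂]; field_simp
  set c := z ^ (-(1 / ((k:ℝ) + 1))) with hcdef
  have hcpos : 0 < c := Real.rpow_pos_of_pos hz0 _
  have hc1 : c < 1 := Real.rpow_lt_one_of_one_lt_of_neg hz
    (neg_lt_zero.mpr (by positivity))
  have h1c : 0 < 1 - c := by linarith
  have hck : c ^ (k + 1) = z⁻¹ := by
    rw [hcdef, ← Real.rpow_natCast (z ^ (-(1 / ((k:ℝ) + 1)))) (k + 1),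
      ← Real.rpow_mul hz0.le]
    have : (-(1 / ((k:ℝ) + 1))) * ((k:ℝ) + 1) = -1 := by field_simp
    push_cast
    rw [this, Real.rpow_neg_one]
  have hCp' : 0 < (1 - c) ^ (-z) := Real.rpow_pos_of_pos h1c _
  refine ⟨Real.exp a₂ + (1 - c) ^ (-z), add_pos (Real.exp_pos _) hCp', ?_⟩
  intro u hu
  have hψ₂0 : 0 ≤ psiK k m₂ u := psiK_nonneg k m₂ hu
  have hψ₁0 : 0 ≤ psiK k m₁ u := psiK_nonneg k m₁ hu
  have hX : 0 ≤ (psiK k m₁ u) ^ z := Real.rpow_nonneg hψ₁0 z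
  have hCp : 0 < (1 - c) ^ (-z) := Real.rpow_pos_of_pos h1c _
  rcases le_or_gt u 1 with h | h
  · -- small u : psiK k m₂ u ≤ exp a₂
    have h2 : psiK k m₂ u ≤ Real.exp a₂ := by
      have := psiK_le k m₂ hm₂0.le hu
      have hu1 : u ^ (k + 1) ≤ 1 := pow_le_one₀ hu h
      have : psiK k m₂ u ≤ 1 * Real.exp (a₂ * 1) := by
        refine le_trans this (mul_le_mul h (Real.exp_le_exp.mpr ?_) (Real.exp_pos _).le one_pos.le)
        exact mul_le_mul_of_nonneg_left hu1 ha₂0.le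
      simpa using this
    have h3 : (psiK k m₂ u) ^ r ≤ (Real.exp a₂) ^ r :=
      Real.rpow_le_rpow hψ₂0 h2 hr0.le
    have h4 : (Real.exp a₂) ^ r ≤ Real.exp a₂ := by
      rw [exp_rpow']
      exact Real.exp_le_exp.mpr (by nlinarith)
    nlinarith [Real.exp_pos a₂]
  · -- large u
    have hu1 : (1:ℝ) ≤ u := h.le
    -- upper bound for psiK k m₂ u ^ r
    have hup : (psiK k m₂ u) ^ r ≤ u * Real.exp (a₁ * u ^ (k + 1)) := by
      have h2 : (psiK k m₂ u) ^ r ≤ (u * Real.exp (a₂ * u ^ (k + 1))) ^ r :=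
        Real.rpow_le_rpow hψ₂0 (psiK_le k m₂ hm₂0.le hu) hr0.le
      have h3 : (u * Real.exp (a₂ * u ^ (k + 1))) ^ r
          = u ^ r * Real.exp (a₁ * u ^ (k + 1)) := by
        rw [Real.mul_rpow hu (Real.exp_pos _).le, exp_rpow',
          show a₂ * u ^ (k+1) * r = (r * a₂) * u ^ (k+1) by ring, hra]
      have h4 : u ^ r ≤ u := by
        have := Real.rpow_le_rpow_of_exponent_le hu1 hr1
        rwa [Real.rpow_one] at this
      calc (psiK k m₂ u) ^ r ≤ u ^ r * Real.exp (a₁ * u ^ (k + 1)) := by rw [← h3]; exact h2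
        _ ≤ u * Real.exp (a₁ * u ^ (k + 1)) :=
          mul_le_mul_of_nonneg_right h4 (Real.exp_pos _).le
    -- lower bound for psiK k m₁ u
    have hlow : (1 - c) * u * Real.exp (a₁ / z * u ^ (k + 1)) ≤ psiK k m₁ u := by
      have := psiK_ge k m₁ hm₁.le (show (0:ℝ) ≤ c * u by positivity)
        (show c * u ≤ u by nlinarith)
      have he : a₁ * (c * u) ^ (k + 1) = a₁ / z * u ^ (k + 1) := by
        rw [mul_pow, hck]; field_simp
      rw [he] at this
      calc (1 - c) * u * Real.exp (a₁ / z * u ^ (k + 1))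
          = (u - c * u) * Real.exp (a₁ / z * u ^ (k + 1)) := by ring_nf
        _ ≤ psiK k m₁ u := this
    have hBpos : 0 < (1 - c) * u * Real.exp (a₁ / z * u ^ (k + 1)) := by positivity
    have hlowz : (1 - c) ^ z * (u * Real.exp (a₁ * u ^ (k + 1))) ≤ (psiK k m₁ u) ^ z := by
      have h5 : ((1 - c) * u * Real.exp (a₁ / z * u ^ (k + 1))) ^ z ≤ (psiK k m₁ u) ^ z :=
        Real.rpow_le_rpow hBpos.le hlow hz0.le
      have h6 : ((1 - c) * u * Real.exp (a₁ / z * u ^ (k + 1))) ^ z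
          = (1 - c) ^ z * u ^ z * Real.exp (a₁ * u ^ (k + 1)) := by
        rw [Real.mul_rpow (by positivity) (Real.exp_pos _).le,
          Real.mul_rpow h1c.le hu, exp_rpow']
        have : a₁ / z * u ^ (k + 1) * z = a₁ * u ^ (k + 1) := by field_simp
        rw [this]
      have h7 : u ≤ u ^ z := by
        have := Real.rpow_le_rpow_of_exponent_le hu1 hz.le
        rwa [Real.rpow_one] at this
      have h8 : (1 - c) ^ z * (u * Real.exp (a₁ * u ^ (k + 1)))
          ≤ (1 - c) ^ z * u ^ z * Real.exp (a₁ * u ^ (k + 1)) := by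
        have hp : 0 < (1 - c) ^ z := Real.rpow_pos_of_pos h1c _
        calc (1 - c) ^ z * (u * Real.exp (a₁ * u ^ (k + 1)))
            = ((1 - c) ^ z * u) * Real.exp (a₁ * u ^ (k + 1)) := by ring
          _ ≤ ((1 - c) ^ z * u ^ z) * Real.exp (a₁ * u ^ (k + 1)) :=
            mul_le_mul_of_nonneg_right (mul_le_mul_of_nonneg_left h7 hp.le)
              (Real.exp_pos _).le
      rw [h6] at h5
      linarith
    have hfin : u * Real.exp (a₁ * u ^ (k + 1)) ≤ (1 - c) ^ (-z) * (psiK k m₁ u) ^ z := by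
      have hp : 0 < (1 - c) ^ z := Real.rpow_pos_of_pos h1c _
      rw [Real.rpow_neg h1c.le, inv_mul_eq_div, le_div_iff₀ hp, mul_comm]
      exact hlowz
    have hkey := le_trans hup hfin
    exact le_trans hkey (habs' _ _ _ (Real.exp_pos _) hCp hX)
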